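/- arXiv:0912.2820 — 8 statements merged into one kernel-verified Lean document; each statement's English description precedes it below -/
import Mathlib

section
/- Let X, Y, B, B₁, B₂ be types with X and Y finite and nonempty, and let f : X × Y → B. Suppose there exist functions f₁ : X → B₁, f₂ : Y → B₂, and g : B₁ × B₂ → B such that f (x, y) = g (f₁ x, f₂ y) for all x ∈ X, y ∈ Y, and such that the cardinality of the image f₁(X) is at most the cardinality of the image f(X × Y). Define the relation ≡ on X by a ≡ b iff f (a, y) = f (b, y) for all y ∈ Y. Then the number of equivalence classes of ≡ is at most the cardinality of the image f(X × Y). -/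
/-- Lemma 4.1: for a divisible target function `f (x, y) = g (f₁ x, f₂ y)` with
`|f₁(X)| ≤ |f(X × Y)|`, the footprint size of `f` with respect to the first block
is at most `|f(X × Y)|`. -/
theorem stmt_4 {X Y B B₁ B₂ : Type*} [Fintype X] [Fintype Y] [Nonempty X] [Nonempty Y]
    (f : X × Y → B) (f₁ : X → B₁) (f₂ : Y → B₂) (g : B₁ × B₂ → B)
    (hg : ∀ x y, f (x, y) = g (f₁ x, f₂ y))
    (hcard : Nat.card (Set.range f₁) ≤ Nat.card (Set.range f)) :
    Nat.card (Quotient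
      { r := fun a b : X => ∀ y, f (a, y) = f (b, y)
        iseqv := ⟨fun _ _ => rfl, fun h y => (h y).symm,
          fun h1 h2 y => (h1 y).trans (h2 y)⟩ })
      ≤ Nat.card (Set.range f) := by
  set s : Setoid X :=
    { r := fun a b : X => ∀ y, f (a, y) = f (b, y)
      iseqv := ⟨fun _ _ => rfl, fun h y => (h y).symm,
        fun h1 h2 y => (h1 y).trans (h2 y)⟩ }
  have hsurj : Function.Surjective
      (fun b : Set.range f₁ => (Quotient.mk s b.2.choose : Quotient s)) := by
    intro q
    induction q using Quotient.ind with
    | _ x =>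
      refine ⟨⟨f₁ x, ⟨x, rfl⟩⟩, Quotient.sound ?_⟩
      intro y
      have hx : f₁ (⟨f₁ x, ⟨x, rfl⟩⟩ : Set.range f₁).2.choose = f₁ x :=
        (⟨f₁ x, ⟨x, rfl⟩⟩ : Set.range f₁).2.choose_spec
      rw [hg, hg, hx]
  calc Nat.card (Quotient s) ≤ Nat.card (Set.range f₁) :=
        Nat.card_le_card_of_surjective _ hsurj
    _ ≤ Nat.card (Set.range f) := hcard
end

section
/- Let k and M be positive integers, let A₁, …, A_M : Finset (Finset (Fin k)) be families of subsets of Fin k, and let j ∈ Fin k be a coordinate. Then the number of distinct sum vectors arising from the compressed product is at most the number arising from the original product: |Q(∏_{i=1}^M φ^{(j)}(A_i))| ≤ |Q(∏_{i=1}^M A_i)|. -/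
/-- The sumset `Q(∏ᵢ Aᵢ)`: the set of all vectors `p : Fin k → ℕ` of the form
`p l = #{i : l ∈ aᵢ}` for some choice `aᵢ ∈ Aᵢ` (identifying `{0,1}^k` with the
powerset of `Fin k`). -/
def Qset {k M : ℕ} (A : Fin M → Finset (Finset (Fin k))) : Finset (Fin k → ℕ) :=
  (Fintype.piFinset A).image fun a l => (Finset.univ.filter fun i => l ∈ a i).card

open Finset

/-- Key construction: from a tuple `b` of members of the compressed families realizing a
sum vector, and any `t` at most the `j`-th coordinate, we can pick members of the original
families with the same sum vector off `j` and `j`-coordinate `t + c` for the fixed shift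
`c = #{i : j ∉ bᵢ ∧ bᵢ ∉ Aᵢ}`. -/
lemma exists_tuple {k M : ℕ} (A : Fin M → Finset (Finset (Fin k))) (j : Fin k)
    (b : Fin M → Finset (Fin k)) (hb : ∀ i, b i ∈ Down.compression j (A i))
    (t : ℕ) (ht : t ≤ (Finset.univ.filter fun i => j ∈ b i).card) :
    ∃ a : Fin M → Finset (Fin k), (∀ i, a i ∈ A i) ∧
      (∀ l, l ≠ j → ∀ i, (l ∈ a i ↔ l ∈ b i)) ∧
      (Finset.univ.filter fun i => j ∈ a i).card
        = t + (Finset.univ.filter fun i => j ∉ b i ∧ b i ∉ A i).card := by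
  obtain ⟨J', hJ'sub, hJ'card⟩ :=
    Finset.exists_subset_card_eq (s := Finset.univ.filter fun i => j ∈ b i) ht
  refine ⟨fun i => if j ∈ b i then (if i ∈ J' then b i else (b i).erase j)
      else (if b i ∈ A i then b i else insert j (b i)), ?_, ?_, ?_⟩
  · intro i
    have h := (Down.mem_compression).1 (hb i)
    by_cases hj : j ∈ b i
    · rcases h with ⟨h1, h2⟩ | ⟨h1, h2⟩
      · simp only [hj, if_true]
        split <;> [exact h1; exact h2]
      · exact absurd (by rwa [Finset.insert_eq_self.2 hj] at h2) h1
    · simp only [hj, if_false]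
      rcases h with ⟨h1, _⟩ | ⟨h1, h2⟩
      · simp [h1]
      · simp [h1, h2]
  · intro l hl i
    by_cases hj : j ∈ b i <;> simp only [hj, if_true, if_false] <;> split <;>
      simp [Finset.mem_erase, Finset.mem_insert, hl, Ne.symm hl]
  · have hset : (Finset.univ.filter fun i =>
        j ∈ (if j ∈ b i then (if i ∈ J' then b i else (b i).erase j)
          else (if b i ∈ A i then b i else insert j (b i)))) =
        J' ∪ (Finset.univ.filter fun i => j ∉ b i ∧ b i ∉ A i) := by
      ext i
      simp only [Finset.mem_filter, Finset.mem_univ, true_and, Finset.mem_union]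
      by_cases hj : j ∈ b i
      · rw [if_pos hj]
        constructor
        · intro h
          by_cases hJ : i ∈ J'
          · exact Or.inl hJ
          · rw [if_neg hJ] at h
            exact absurd rfl (Finset.mem_erase.1 h).1
        · rintro (hJ | hJ)
          · rw [if_pos hJ]; exact hj
          · exact absurd hj hJ.1
      · rw [if_neg hj]
        by_cases hA : b i ∈ A i
        · rw [if_pos hA]
          constructor
          · intro h; exact absurd h hj
          · rintro (h | h)
            · exact (Finset.mem_filter.1 (hJ'sub h)).2
            · exact absurd hA h.2
        · rw [if_neg hA]
          constructor
          · intro _; exact Or.inr ⟨hj, hA⟩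
          · intro _; exact Finset.mem_insert_self j _
    rw [hset, Finset.card_union_of_disjoint, hJ'card]
    refine Finset.disjoint_left.2 fun i hi₁ hi₂ => ?_
    have := hJ'sub hi₁
    simp only [Finset.mem_filter] at this hi₂
    exact hi₂.2.1 this.2

/-- Applying a down-compression at a coordinate `j` to each family does not
increase the number of distinct sum vectors. -/
theorem stmt_6 (k M : ℕ) (hk : 0 < k) (hM : 0 < M)
    (A : Fin M → Finset (Finset (Fin k))) (j : Fin k) :
    (Qset fun i => Down.compression j (A i)).card ≤ (Qset A).card := by
  classical
  set Qφ := Qset fun i => Down.compression j (A i) with hQφ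
  set QA := Qset A with hQA
  set π : (Fin k → ℕ) → (Fin k → ℕ) := fun p => Function.update p j 0 with hπ
  -- fiberwise inequality
  have fiber_le : ∀ x ∈ Qφ.image π,
      (Qφ.filter fun p => π p = x).card ≤ (QA.filter fun p => π p = x).card := by
    intro x hx
    obtain ⟨p₀, hp₀, hp₀x⟩ := Finset.mem_image.1 hx
    have hxj : x j = 0 := by rw [← hp₀x]; simp [π]
    -- the set of j-values in the fiber
    have hfne : (Qφ.filter fun p => π p = x).Nonempty :=
      ⟨p₀, Finset.mem_filter.2 ⟨hp₀, hp₀x⟩⟩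
    set V := (Qφ.filter fun p => π p = x).image fun p => p j with hV
    have hVne : V.Nonempty := hfne.image _
    obtain ⟨pm, hpm, hpmj⟩ := Finset.mem_image.1 (V.max'_mem hVne)
    have hpmQ := (Finset.mem_filter.1 hpm).1
    have hpmx := (Finset.mem_filter.1 hpm).2
    obtain ⟨b, hbmem, hbsum⟩ := Finset.mem_image.1 hpmQ
    rw [Fintype.mem_piFinset] at hbmem
    set c := (Finset.univ.filter fun i => j ∉ b i ∧ b i ∉ A i).card with hc
    -- every fiber element's j-value is at most pm j = #{i : j ∈ b i}
    have hbj : (Finset.univ.filter fun i => j ∈ b i).card = pm j := by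
      rw [← hbsum]
    -- the injection
    refine Finset.card_le_card_of_injOn (fun p => Function.update p j (p j + c)) ?_ ?_
    · intro p hp
      have hpQ := (Finset.mem_filter.1 hp).1
      have hpx := (Finset.mem_filter.1 hp).2
      have hple : p j ≤ pm j := by
        rw [hpmj]
        exact Finset.le_max' V _ (Finset.mem_image.2 ⟨p, hp, rfl⟩)
      obtain ⟨a, hamem, haoff, hacard⟩ :=
        exists_tuple A j b hbmem (p j) (by rw [hbj]; exact hple)
      refine Finset.mem_filter.2 ⟨?_, ?_⟩
      · refine Finset.mem_image.2 ⟨a, Fintype.mem_piFinset.2 hamem, ?_⟩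
        funext l
        by_cases hl : l = j
        · subst hl; simp [hacard, hc]
        · have : (Finset.univ.filter fun i => l ∈ a i)
              = Finset.univ.filter fun i => l ∈ b i := by
            ext i; simp [haoff l hl i]
          simp only [Function.update_of_ne hl]
          rw [this]
          have : pm l = (Finset.univ.filter fun i => l ∈ b i).card := by
            rw [← hbsum]
          rw [← this]
          have := congrFun hpx l
          have h2 := congrFun hpmx l
          simp only [π, Function.update_of_ne hl] at this h2
          rw [this, h2]
      · funext l
        by_cases hl : l = j
        · subst hl; simp [π, hxj]
        · simp only [π, Function.update_of_ne hl]
          have := congrFun hpx l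
          simpa [π, Function.update_of_ne hl] using this
    · intro p hp q hq hpq
      have hpx := (Finset.mem_filter.1 hp).2
      have hqx := (Finset.mem_filter.1 hq).2
      have hj : p j = q j := by
        have := congrFun hpq j
        simpa using this
      funext l
      by_cases hl : l = j
      · subst hl; exact hj
      · have h1 := congrFun hpx l
        have h2 := congrFun hqx l
        simp only [π, Function.update_of_ne hl] at h1 h2
        rw [h1, h2]
  -- image inclusion
  have himg : Qφ.image π ⊆ QA.image π := by
    intro x hx
    have h1 : (Qφ.filter fun p => π p = x).Nonempty := by
      obtain ⟨p₀, hp₀, hp₀x⟩ := Finset.mem_image.1 hx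
      exact ⟨p₀, Finset.mem_filter.2 ⟨hp₀, hp₀x⟩⟩
    have h2 : 0 < (QA.filter fun p => π p = x).card :=
      lt_of_lt_of_le (Finset.card_pos.2 h1) (fiber_le x hx)
    obtain ⟨q, hq⟩ := Finset.card_pos.1 h2
    exact Finset.mem_image.2 ⟨q, (Finset.mem_filter.1 hq).1, (Finset.mem_filter.1 hq).2⟩
  calc Qφ.card = ∑ x ∈ Qφ.image π, (Qφ.filter fun p => π p = x).card :=
        Finset.card_eq_sum_card_fiberwise fun p hp =>
          Finset.mem_image.2 ⟨p, hp, rfl⟩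
    _ ≤ ∑ x ∈ Qφ.image π, (QA.filter fun p => π p = x).card :=
        Finset.sum_le_sum fiber_le
    _ ≤ ∑ x ∈ QA.image π, (QA.filter fun p => π p = x).card :=
        Finset.sum_le_sum_of_subset himg
    _ = QA.card :=
        (Finset.card_eq_sum_card_fiberwise fun p hp =>
          Finset.mem_image.2 ⟨p, hp, rfl⟩).symm
end

section
/- Let k and M be positive integers and let A₁, …, A_M : Finset (Finset (Fin k)) be families of subsets of Fin k. For each i, let B_i be the family obtained from A_i by successively applying the down-compression at all coordinates 0, 1, …, k−1 in order, i.e., B_i = φ^{(k−1)}(φ^{(k−2)}(⋯φ^{(0)}(A_i))). Then |Q(∏_{i=1}^M A_i)| ≥ |Q(∏_{i=1}^M B_i)|. -/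
open Finset

/-- Key combinatorial lemma: from a choice `a` in the compressed families, for every
`t ≤ #{i : j ∈ a i}` we can find a point of `Qset A` agreeing with the count vector of `a`
off coordinate `j`, with `j`-coordinate `t + r` where `r = #{i : a i ∉ A i}`. -/
lemma key_lemma {k M : ℕ} (j : Fin k) (A : Fin M → Finset (Finset (Fin k)))
    (a : Fin M → Finset (Fin k))
    (ha : ∀ i, a i ∈ Down.compression j (A i))
    {t : ℕ} (ht : t ≤ (Finset.univ.filter fun i => j ∈ a i).card) :
    ∃ p ∈ Qset A, (∀ l, l ≠ j → p l = (Finset.univ.filter fun i => l ∈ a i).card) ∧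
      p j = t + (Finset.univ.filter fun i => a i ∉ A i).card := by
  classical
  set I₁ : Finset (Fin M) := Finset.univ.filter fun i => j ∈ a i with hI₁
  set I₂ : Finset (Fin M) := Finset.univ.filter fun i => a i ∉ A i with hI₂
  have hdis : Disjoint I₁ I₂ := by
    rw [Finset.disjoint_left]
    intro i h1 h2
    simp only [hI₁, hI₂, Finset.mem_filter, Finset.mem_univ, true_and] at h1 h2
    rcases Down.mem_compression.1 (ha i) with h | h
    · exact h2 h.1
    · rw [Finset.insert_eq_of_mem h1] at h
      exact h.1 h.2
  obtain ⟨s, hsub, hcard⟩ := Finset.exists_subset_card_eq (Nat.sub_le I₁.card t)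
  set a' : Fin M → Finset (Fin k) := fun i =>
    if i ∈ s then (a i).erase j else if a i ∈ A i then a i else insert j (a i) with ha'def
  have ha' : ∀ i, a' i ∈ A i := by
    intro i
    by_cases his : i ∈ s
    · have hji : j ∈ a i := by
        have := hsub his
        simp only [hI₁, Finset.mem_filter] at this
        exact this.2
      rcases Down.mem_compression.1 (ha i) with h | h
      · simpa [ha'def, his] using h.2
      · rw [Finset.insert_eq_of_mem hji] at h
        exact absurd h.2 h.1
    · by_cases hA : a i ∈ A i
      · simpa [ha'def, his, hA] using hA
      · rcases Down.mem_compression.1 (ha i) with h | h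
        · exact absurd h.1 hA
        · simpa [ha'def, his, hA] using h.2
  refine ⟨fun l => (Finset.univ.filter fun i => l ∈ a' i).card, ?_, ?_, ?_⟩
  · simp only [Qset, Finset.mem_image]
    exact ⟨a', by simpa [Fintype.mem_piFinset] using ha', rfl⟩
  · intro l hl
    show (Finset.univ.filter fun i => l ∈ a' i).card = _
    congr 1
    apply Finset.filter_congr
    intro i _
    simp only [ha'def]
    split_ifs with h1 h2 <;> simp [Finset.mem_erase, Finset.mem_insert, hl]
  · have hset : (Finset.univ.filter fun i => j ∈ a' i) = (I₁ ∪ I₂) \ s := by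
      ext i
      simp only [Finset.mem_filter, Finset.mem_univ, true_and, Finset.mem_sdiff,
        Finset.mem_union, hI₁, hI₂]
      simp only [ha'def]
      split_ifs with h1 h2
      · simp [h1]
      · simp [h1, h2]
      · simp [h1, h2]
    show (Finset.univ.filter fun i => j ∈ a' i).card = _
    rw [hset, Finset.card_sdiff_of_subset (hsub.trans Finset.subset_union_left),
      Finset.card_union_of_disjoint hdis, hcard]
    omega

/-- One-step compression does not increase the cardinality of the sumset. -/
lemma step_lemma {k M : ℕ} (j : Fin k) (A : Fin M → Finset (Finset (Fin k))) :
    (Qset fun i => Down.compression j (A i)).card ≤ (Qset A).card := by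
  classical
  set B : Fin M → Finset (Finset (Fin k)) := fun i => Down.compression j (A i) with hB
  set proj : (Fin k → ℕ) → (Fin k → ℕ) := fun p => Function.update p j 0 with hproj
  have hstruct : ∀ p q : Fin k → ℕ, proj p = q → p = Function.update q j (p j) := by
    intro p q hq
    funext l
    by_cases hl : l = j
    · subst hl; simp
    · rw [Function.update_of_ne hl, ← hq, hproj]
      simp [Function.update_of_ne hl]
  have fiber_le : ∀ q, ((Qset B).filter fun p => proj p = q).Nonempty →
      (((Qset B).filter fun p => proj p = q).card ≤ ((Qset A).filter fun p => proj p = q).card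
        ∧ ∃ y ∈ Qset A, proj y = q) := by
    intro q hne
    obtain ⟨p₀, hp₀⟩ := hne
    have hq0 : q j = 0 := by
      have h := (Finset.mem_filter.1 hp₀).2
      rw [← h, hproj]; simp
    set F := (Qset B).filter fun p => proj p = q with hF
    obtain ⟨pm, hpmF, hpmT⟩ := Finset.exists_mem_eq_sup F ⟨p₀, hp₀⟩ (fun p => p j)
    set T := F.sup (fun p => p j) with hT
    have hFsub : F ⊆ (Finset.range (T+1)).image (fun t => Function.update q j t) := by
      intro p hp
      refine Finset.mem_image.2 ⟨p j, Finset.mem_range.2 ?_,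
        (hstruct p q (Finset.mem_filter.1 hp).2).symm⟩
      exact Nat.lt_succ_of_le (Finset.le_sup (f := fun p => p j) hp)
    have hFcard : F.card ≤ T + 1 :=
      (Finset.card_le_card hFsub).trans ((Finset.card_image_le).trans (by simp))
    have hpmB : pm ∈ Qset B := (Finset.mem_filter.1 hpmF).1
    obtain ⟨a, haB, hacnt⟩ := Finset.mem_image.1 hpmB
    have haB' : ∀ i, a i ∈ Down.compression j (A i) := by
      simpa [Fintype.mem_piFinset, hB] using haB
    have hTa : (Finset.univ.filter fun i => j ∈ a i).card = T := by
      exact (congrFun hacnt j).trans hpmT.symm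
    have hql : ∀ l, l ≠ j → q l = (Finset.univ.filter fun i => l ∈ a i).card := by
      intro l hl
      have h := (Finset.mem_filter.1 hpmF).2
      have : q l = pm l := by
        rw [← h, hproj]; simp [Function.update_of_ne hl]
      rw [this, ← congrFun hacnt l]
    set r := (Finset.univ.filter fun i => a i ∉ A i).card with hr
    have himg : ∀ t, t ≤ T →
        Function.update q j (t + r) ∈ (Qset A).filter fun p => proj p = q := by
      intro t htT
      obtain ⟨p, hpA, hoff, hpj⟩ := key_lemma j A a haB' (t := t) (by rw [hTa]; exact htT)
      have hpq : p = Function.update q j (t + r) := by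
        funext l
        by_cases hl : l = j
        · subst hl; simp [hpj, hr]
        · rw [Function.update_of_ne hl, hoff l hl, hql l hl]
      refine Finset.mem_filter.2 ⟨hpq ▸ hpA, ?_⟩
      funext l
      by_cases hl : l = j
      · subst hl; rw [hproj]; simp [hq0]
      · rw [hproj]; simp [Function.update_of_ne hl]
    have hinj : Set.InjOn (fun t => Function.update q j (t + r))
        ↑(Finset.range (T+1)) := by
      intro x _ y _ h
      have := congrFun h j
      simpa using this
    have hA1 : T + 1 ≤ ((Qset A).filter fun p => proj p = q).card := by
      calc T + 1
          = ((Finset.range (T+1)).image fun t => Function.update q j (t + r)).card := by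
            rw [Finset.card_image_of_injOn hinj, Finset.card_range]
        _ ≤ _ := by
            apply Finset.card_le_card
            intro x hx
            obtain ⟨t, htr, rfl⟩ := Finset.mem_image.1 hx
            exact himg t (Nat.lt_succ_iff.1 (Finset.mem_range.1 htr))
    have h0 := himg 0 (Nat.zero_le _)
    exact ⟨hFcard.trans hA1,
      ⟨Function.update q j (0 + r), (Finset.mem_filter.1 h0).1, (Finset.mem_filter.1 h0).2⟩⟩
  have Hmap : ∀ p ∈ Qset B, proj p ∈ (Qset A).image proj := by
    intro p hp
    obtain ⟨-, y, hy, hyq⟩ := fiber_le (proj p) ⟨p, Finset.mem_filter.2 ⟨hp, rfl⟩⟩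
    exact Finset.mem_image.2 ⟨y, hy, hyq⟩
  calc (Qset B).card
      = ∑ q ∈ (Qset A).image proj, ((Qset B).filter fun p => proj p = q).card :=
        Finset.card_eq_sum_card_fiberwise Hmap
    _ ≤ ∑ q ∈ (Qset A).image proj, ((Qset A).filter fun p => proj p = q).card := by
        apply Finset.sum_le_sum
        intro q _
        by_cases hne : ((Qset B).filter fun p => proj p = q).Nonempty
        · exact (fiber_le q hne).1
        · simp [Finset.not_nonempty_iff_eq_empty.1 hne]
    _ = (Qset A).card :=
        (Finset.card_eq_sum_card_fiberwise fun p hp => Finset.mem_image_of_mem proj hp).symm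

/-- Lemma 7.5: if each `Bᵢ` is obtained from `Aᵢ` by successively applying the
down-compressions at all coordinates `0, 1, …, k-1` in order, then
`|Q(∏ᵢ Aᵢ)| ≥ |Q(∏ᵢ Bᵢ)|`. -/
theorem stmt_7 (k M : ℕ) (hk : 0 < k) (hM : 0 < M)
    (A : Fin M → Finset (Finset (Fin k))) :
    (Qset fun i =>
        (List.finRange k).foldl (fun ℬ j => Down.compression j ℬ) (A i)).card
      ≤ (Qset A).card := by
  suffices h : ∀ (L : List (Fin k)) (A : Fin M → Finset (Finset (Fin k))),
      (Qset fun i => L.foldl (fun ℬ j => Down.compression j ℬ) (A i)).card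
        ≤ (Qset A).card from h _ A
  intro L
  induction L with
  | nil => intro A; simp
  | cons j L ih =>
    intro A
    simp only [List.foldl_cons]
    exact (ih fun i => Down.compression j (A i)).trans (step_lemma j A)
end

section
/- Let k and M be positive integers and let δ ∈ (0,1) be a real number. For every m : Fin k → ℕ such that m i ≤ M for all i and δ·M·k ≤ ∑ i, m i, it holds that (M+1)^(δ·k) ≤ ∏ i, (1 + m i), where the left-hand side is a real power and the right-hand side is the natural-number product cast to ℝ. -/
/-- Lemma 7.7: if `0 ≤ mᵢ ≤ M` for all `i ∈ Fin k` and `∑ᵢ mᵢ ≥ δMk` with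
`δ ∈ (0,1)`, then `∏ᵢ (1 + mᵢ) ≥ (M+1)^(δk)`. -/
theorem stmt_9 (k M : ℕ) (hk : 0 < k) (hM : 0 < M) (δ : ℝ) (hδ : δ ∈ Set.Ioo (0:ℝ) 1)
    (m : Fin k → ℕ) (hm : ∀ i, m i ≤ M)
    (hsum : δ * M * k ≤ ∑ i, (m i : ℝ)) :
    ((M : ℝ) + 1) ^ (δ * k) ≤ ((∏ i, (1 + m i) : ℕ) : ℝ) := by
  have hM0 : (0:ℝ) < M := by exact_mod_cast hM
  have hb : (1:ℝ) < (M:ℝ) + 1 := by linarith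
  have step1 : ((M:ℝ) + 1) ^ (δ * k) ≤ ((M:ℝ) + 1) ^ ((∑ i, (m i : ℝ)) / M) := by
    apply Real.rpow_le_rpow_left_iff hb |>.2
    rw [le_div_iff₀ hM0]
    linarith [hsum]
  have step2 : ((M:ℝ) + 1) ^ ((∑ i, (m i : ℝ)) / M)
      = ∏ i, ((M:ℝ) + 1) ^ ((m i : ℝ) / M) := by
    rw [Finset.sum_div, Real.rpow_sum_of_pos (by linarith)]
  have step3 : ∏ i, ((M:ℝ) + 1) ^ ((m i : ℝ) / M) ≤ ∏ i, ((1:ℝ) + m i) := by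
    apply Finset.prod_le_prod
    · intro i _; positivity
    · intro i _
      have h1 : (0:ℝ) ≤ (m i : ℝ) / M := by positivity
      have h2 : (m i : ℝ) / M ≤ 1 := by
        rw [div_le_one hM0]; exact_mod_cast hm i
      have := rpow_one_add_le_one_add_mul_self (s := (M:ℝ)) (by linarith) h1 h2
      calc ((M:ℝ) + 1) ^ ((m i : ℝ) / M) = (1 + (M:ℝ)) ^ ((m i : ℝ) / M) := by ring_nf
        _ ≤ 1 + ((m i : ℝ) / M) * M := this
        _ = 1 + m i := by field_simp
  have : ((∏ i, (1 + m i) : ℕ) : ℝ) = ∏ i, ((1:ℝ) + m i) := by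
    push_cast; ring_nf
  rw [this]
  exact le_trans step1 (step2 ▸ step3)
end

section
/- Let k and n be positive integers. Suppose there exist functions z₁, z₂ : (Fin k → Fin 2) → (Fin k → Fin 2) → (Fin n → Fin 2) and a decoder ψ : (Fin n → Fin 2) → (Fin n → Fin 2) → (Fin k → ℕ) such that for all w₁, w₂, w₃ : Fin k → Fin 2 and all i ∈ Fin k, ψ (z₁ w₁ w₃) (z₂ w₂ w₃) i = (w₁ i : ℕ) + (w₂ i : ℕ) + (w₃ i : ℕ). Let p : Fin k → ℕ satisfy p i ≤ 3 for all i, let A_p = { (z₁ w₁ w₃, z₂ w₂ w₃) : w₁, w₂, w₃ ∈ (Fin k → Fin 2) and for all i, (w₁ i : ℕ) + (w₂ i : ℕ) + (w₃ i : ℕ) = p i }, and let j = #{ i : p i = 0 ∨ p i = 3 }. Then |A_p| ≥ 2^(k−j). -/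
/-- In any `(k,n)` solution for computing the arithmetic sum in the diamond
network, the set `A_p` of possible pairs of received edge-vectors when the sum
equals `p` has size at least `2^(k-j)`, where `j` is the number of components of
`p` equal to `0` or `3`. -/
theorem stmt_11 (k n : ℕ) (hk : 0 < k) (hn : 0 < n)
    (z₁ z₂ : (Fin k → Fin 2) → (Fin k → Fin 2) → (Fin n → Fin 2))
    (ψ : (Fin n → Fin 2) → (Fin n → Fin 2) → (Fin k → ℕ))
    (hψ : ∀ w₁ w₂ w₃ : Fin k → Fin 2, ∀ i : Fin k,
      ψ (z₁ w₁ w₃) (z₂ w₂ w₃) i = (w₁ i : ℕ) + (w₂ i : ℕ) + (w₃ i : ℕ))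
    (p : Fin k → ℕ) (hp : ∀ i, p i ≤ 3) :
    2 ^ (k - (Finset.univ.filter fun i => p i = 0 ∨ p i = 3).card)
      ≤ Nat.card {pr : (Fin n → Fin 2) × (Fin n → Fin 2) |
          ∃ w₁ w₂ w₃ : Fin k → Fin 2,
            (∀ i, (w₁ i : ℕ) + (w₂ i : ℕ) + (w₃ i : ℕ) = p i) ∧
              pr = (z₁ w₁ w₃, z₂ w₂ w₃)} := by
  classical
  set S : Finset (Fin k) := Finset.univ.filter (fun i => p i = 1 ∨ p i = 2) with hS
  set T : Finset (Fin k) := Finset.univ.filter (fun i => p i = 0 ∨ p i = 3) with hT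
  have hST : T.card + S.card = k := by
    have h1 := Finset.card_filter_add_card_filter_not
      (s := (Finset.univ : Finset (Fin k))) (p := fun i => p i = 0 ∨ p i = 3)
    have h2 : (Finset.univ.filter (fun i => ¬ (p i = 0 ∨ p i = 3))) = S := by
      apply Finset.filter_congr
      intro i _
      have := hp i
      constructor <;> intro h <;> omega
    rw [h2] at h1
    simpa using h1
  have hks : k - T.card = S.card := by omega
  rw [hks]
  -- define the messages
  set W3 : Fin k → Fin 2 := fun i => if p i = 2 ∨ p i = 3 then 1 else 0 with hW3
  set W1 : (S → Fin 2) → Fin k → Fin 2 := fun f i =>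
    if h : i ∈ S then f ⟨i, h⟩ else if p i = 3 then 1 else 0 with hW1
  set W2 : (S → Fin 2) → Fin k → Fin 2 := fun f i =>
    if h : i ∈ S then (if f ⟨i, h⟩ = 0 then 1 else 0) else if p i = 3 then 1 else 0
    with hW2
  have hval : ∀ (x : Fin 2), x = 0 ∨ (x : ℕ) = 1 := by
    intro x
    by_cases hx : x = 0
    · exact Or.inl hx
    · right
      have h1 : (x : ℕ) ≠ 0 := fun hc => hx (Fin.ext hc)
      have h2 : (x : ℕ) < 2 := x.isLt
      omega
  have hsum : ∀ f i, ((W1 f i : ℕ)) + (W2 f i : ℕ) + (W3 i : ℕ) = p i := by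
    intro f i
    have hpi := hp i
    by_cases h : i ∈ S
    · have hp12 : p i = 1 ∨ p i = 2 := by
        have := h; rw [hS, Finset.mem_filter] at this; exact this.2
      rcases hval (f ⟨i, h⟩) with hf | hf
      · simp only [hW1, hW2, hW3, dif_pos h, hf]
        rcases hp12 with h1 | h1 <;> simp [h1]
      · have hf0 : f ⟨i, h⟩ ≠ 0 := by
          intro hc; rw [hc] at hf; simp at hf
        simp only [hW1, hW2, hW3, dif_pos h, if_neg hf0, hf]
        rcases hp12 with h1 | h1 <;> simp [h1]
    · have hp03 : p i = 0 ∨ p i = 3 := by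
        have hn12 : ¬ (p i = 1 ∨ p i = 2) := by
          intro hc; exact h (by rw [hS, Finset.mem_filter]; exact ⟨Finset.mem_univ i, hc⟩)
        omega
      rcases hp03 with h1 | h1 <;>
        simp [hW1, hW2, hW3, dif_neg h, h1]
  -- the injection
  set A : Set ((Fin n → Fin 2) × (Fin n → Fin 2)) :=
    {pr | ∃ w₁ w₂ w₃ : Fin k → Fin 2,
      (∀ i, (w₁ i : ℕ) + (w₂ i : ℕ) + (w₃ i : ℕ) = p i) ∧
        pr = (z₁ w₁ w₃, z₂ w₂ w₃)} with hA
  have hmem : ∀ f : S → Fin 2, (z₁ (W1 f) W3, z₂ (W2 f) W3) ∈ A := by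
    intro f
    exact ⟨W1 f, W2 f, W3, hsum f, rfl⟩
  set Φ : (S → Fin 2) → A := fun f => ⟨(z₁ (W1 f) W3, z₂ (W2 f) W3), hmem f⟩ with hΦ
  have hinj : Function.Injective Φ := by
    intro f f' hff
    have hpair : (z₁ (W1 f) W3, z₂ (W2 f) W3) = (z₁ (W1 f') W3, z₂ (W2 f') W3) :=
      congrArg Subtype.val hff
    have hz1 : z₁ (W1 f) W3 = z₁ (W1 f') W3 := congrArg Prod.fst hpair
    have hvals : ∀ i, (W1 f i : ℕ) = (W1 f' i : ℕ) := by
      intro i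
      have e1 := hψ (W1 f) (W2 f) W3 i
      have e2 := hψ (W1 f') (W2 f) W3 i
      rw [hz1] at e1
      rw [e2] at e1
      omega
    funext j
    have := hvals j.1
    simp only [hW1, dif_pos j.2] at this
    have h2 : f ⟨j.1, j.2⟩ = f' ⟨j.1, j.2⟩ := Fin.ext this
    simpa using h2
  have hcard := Nat.card_le_card_of_injective Φ hinj
  have hdom : Nat.card (S → Fin 2) = 2 ^ S.card := by
    simp [Nat.card_eq_fintype_card]
  rw [hdom] at hcard
  exact hcard
end

section
/- Let k and n be positive integers. Suppose there exist functions z₁, z₂ : (Fin k → Fin 2) → (Fin k → Fin 2) → (Fin n → Fin 2) and a decoder ψ : (Fin n → Fin 2) → (Fin n → Fin 2) → (Fin k → ℕ) such that for all w₁, w₂, w₃ : Fin k → Fin 2 and all i ∈ Fin k, ψ (z₁ w₁ w₃) (z₂ w₂ w₃) i = (w₁ i : ℕ) + (w₂ i : ℕ) + (w₃ i : ℕ). Then 6^k ≤ 4^n (equivalently, k/n ≤ 2/(1 + log₂ 3)). -/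
/-- Converse part of Theorem 5.1: any `(k,n)` solution for computing the
arithmetic sum of the three binary source messages in the diamond network must
satisfy `6^k ≤ 4^n` (equivalently `k/n ≤ 2/(1 + log₂ 3)`). -/
theorem stmt_12 (k n : ℕ) (hk : 0 < k) (hn : 0 < n)
    (z₁ z₂ : (Fin k → Fin 2) → (Fin k → Fin 2) → (Fin n → Fin 2))
    (ψ : (Fin n → Fin 2) → (Fin n → Fin 2) → (Fin k → ℕ))
    (hψ : ∀ w₁ w₂ w₃ : Fin k → Fin 2, ∀ i : Fin k,
      ψ (z₁ w₁ w₃) (z₂ w₂ w₃) i = (w₁ i : ℕ) + (w₂ i : ℕ) + (w₃ i : ℕ)) :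
    6 ^ k ≤ 4 ^ n := by
  classical
  -- the six allowed per-component triples (w₁ᵢ, w₂ᵢ, w₃ᵢ)
  let t : Fin 6 → Fin 2 × Fin 2 × Fin 2 :=
    ![(0,0,0), (1,0,0), (0,1,0), (1,0,1), (0,1,1), (1,1,1)]
  -- on these triples, the arithmetic sum determines the third coordinate
  have key : ∀ a b : Fin 6,
      ((t a).1 : ℕ) + ((t a).2.1 : ℕ) + ((t a).2.2 : ℕ)
        = ((t b).1 : ℕ) + ((t b).2.1 : ℕ) + ((t b).2.2 : ℕ) →
      (t a).2.2 = (t b).2.2 := by decide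
  have tinj : Function.Injective t := by decide
  -- the encoding map
  let G : (Fin k → Fin 6) → ((Fin n → Fin 2) × (Fin n → Fin 2)) := fun f =>
    (z₁ (fun i => (t (f i)).1) (fun i => (t (f i)).2.2),
     z₂ (fun i => (t (f i)).2.1) (fun i => (t (f i)).2.2))
  have hG : Function.Injective G := by
    intro f g h
    have h1 : z₁ (fun i => (t (f i)).1) (fun i => (t (f i)).2.2)
        = z₁ (fun i => (t (g i)).1) (fun i => (t (g i)).2.2) := congrArg Prod.fst h
    have h2 : z₂ (fun i => (t (f i)).2.1) (fun i => (t (f i)).2.2)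
        = z₂ (fun i => (t (g i)).2.1) (fun i => (t (g i)).2.2) := congrArg Prod.snd h
    -- sums agree componentwise
    have hsum : ∀ i : Fin k,
        ((t (f i)).1 : ℕ) + ((t (f i)).2.1 : ℕ) + ((t (f i)).2.2 : ℕ)
          = ((t (g i)).1 : ℕ) + ((t (g i)).2.1 : ℕ) + ((t (g i)).2.2 : ℕ) := by
      intro i
      have e1 := hψ (fun i => (t (f i)).1) (fun i => (t (f i)).2.1)
        (fun i => (t (f i)).2.2) i
      have e2 := hψ (fun i => (t (g i)).1) (fun i => (t (g i)).2.1)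
        (fun i => (t (g i)).2.2) i
      rw [h1, h2] at e1
      exact e1.symm.trans e2
    -- hence the third coordinates agree
    have hc : (fun i => (t (f i)).2.2) = (fun i => (t (g i)).2.2) := by
      funext i; exact key _ _ (hsum i)
    rw [← hc] at h1 h2
    -- now recover the first coordinates
    have hw1 : ∀ i : Fin k, (t (f i)).1 = (t (g i)).1 := by
      intro i
      have e1 := hψ (fun i => (t (f i)).1) (fun i => (t (f i)).2.1)
        (fun i => (t (f i)).2.2) i
      have e2 := hψ (fun i => (t (g i)).1) (fun i => (t (f i)).2.1)
        (fun i => (t (f i)).2.2) i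
      rw [h1] at e1
      rw [e2] at e1
      exact Fin.val_injective (by omega)
    -- and the second coordinates
    have hw2 : ∀ i : Fin k, (t (f i)).2.1 = (t (g i)).2.1 := by
      intro i
      have e1 := hψ (fun i => (t (f i)).1) (fun i => (t (f i)).2.1)
        (fun i => (t (f i)).2.2) i
      have e2 := hψ (fun i => (t (f i)).1) (fun i => (t (g i)).2.1)
        (fun i => (t (f i)).2.2) i
      rw [h2] at e1
      rw [e2] at e1
      exact Fin.val_injective (by omega)
    funext i
    apply tinj
    have h3 : (t (f i)).2.2 = (t (g i)).2.2 := congrFun hc i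
    exact Prod.ext (hw1 i) (Prod.ext (hw2 i) h3)
  have hcard := Fintype.card_le_of_injective G hG
  simp only [Fintype.card_fun, Fintype.card_fin, Fintype.card_prod] at hcard
  calc 6 ^ k ≤ 2 ^ n * 2 ^ n := hcard
    _ = 4 ^ n := by rw [← mul_pow]; norm_num
end

section
/- Let k be a positive even integer and let n be a positive integer with 6^k ≤ 4^n. Then there exist functions t₁, t₂ : (Fin k → Fin 2) → (Fin n → Fin 2), functions g₁, g₂ : (Fin k → Fin 2) → (Fin n → Fin 2) → (Fin n → Fin 2), and a decoder ψ : (Fin n → Fin 2) → (Fin n → Fin 2) → (Fin k → ℕ) such that for all w₁, w₂, w₃ : Fin k → Fin 2 and all i ∈ Fin k, ψ (g₁ w₁ (t₁ w₃)) (g₂ w₂ (t₂ w₃)) i = (w₁ i : ℕ) + (w₂ i : ℕ) + (w₃ i : ℕ). -/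
/-- Achievability part of Theorem 5.1: if `k` is a positive even integer, `n` is
a positive integer and `6^k ≤ 4^n`, then there is a `(k,n)` solution for
computing the arithmetic sum of the three binary source messages in the diamond
network. -/
theorem stmt_13 (k n : ℕ) (hk : 0 < k) (hkeven : Even k) (hn : 0 < n)
    (hkn : 6 ^ k ≤ 4 ^ n) :
    ∃ (t₁ t₂ : (Fin k → Fin 2) → (Fin n → Fin 2))
      (g₁ g₂ : (Fin k → Fin 2) → (Fin n → Fin 2) → (Fin n → Fin 2))
      (ψ : (Fin n → Fin 2) → (Fin n → Fin 2) → (Fin k → ℕ)),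
      ∀ w₁ w₂ w₃ : Fin k → Fin 2, ∀ i : Fin k,
        ψ (g₁ w₁ (t₁ w₃)) (g₂ w₂ (t₂ w₃)) i
          = (w₁ i : ℕ) + (w₂ i : ℕ) + (w₃ i : ℕ) := by
  classical
  obtain ⟨m, hm⟩ := hkeven
  -- k ≤ n
  have hkn' : k ≤ n := by
    have h1 : (4:ℕ) ^ k ≤ 4 ^ n :=
      le_trans (Nat.pow_le_pow_left (by norm_num) k) hkn
    exact (Nat.pow_le_pow_iff_right (by norm_num)).mp h1
  have hmk : m ≤ k := by omega
  have hmn : m ≤ n := le_trans hmk hkn'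
  -- 6^m ≤ 2^n
  have h6 : 6 ^ m ≤ 2 ^ n := by
    have h1 : (6 ^ m) ^ 2 ≤ (2 ^ n) ^ 2 := by
      calc (6 ^ m) ^ 2 = 6 ^ k := by rw [hm, ← pow_mul]; ring_nf
        _ ≤ 4 ^ n := hkn
        _ = (2 ^ n) ^ 2 := by
          rw [show (4:ℕ) = 2 ^ 2 by norm_num, ← pow_mul, ← pow_mul, Nat.mul_comm]
    exact (Nat.pow_le_pow_iff_left (by norm_num)).mp h1
  -- embedding of the source alphabet into n bits
  have hcard : Fintype.card ((Fin m → Fin 3) × (Fin m → Fin 2))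
      ≤ Fintype.card (Fin n → Fin 2) := by
    simp only [Fintype.card_prod, Fintype.card_fun, Fintype.card_fin]
    calc 3 ^ m * 2 ^ m = 6 ^ m := by rw [← Nat.mul_pow]
      _ ≤ 2 ^ n := h6
  obtain ⟨e⟩ := Function.Embedding.nonempty_of_card_le hcard
  -- index manipulations
  have hlt1 : ∀ j : Fin m, (j : ℕ) < k := fun j => lt_of_lt_of_le j.isLt hmk
  have hlt2 : ∀ j : Fin m, m + (j : ℕ) < k := fun j => by omega
  have hlt3 : ∀ j : Fin m, (j : ℕ) < n := fun j => lt_of_lt_of_le j.isLt hmn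
  refine ⟨fun w₃ j => if h : (j : ℕ) < m then w₃ ⟨j, by omega⟩ else 0,
    fun w₃ j => if h : (j : ℕ) < m then w₃ ⟨m + j, by omega⟩ else 0,
    fun w₁ t => e ⟨fun j => ⟨(w₁ ⟨j, hlt1 j⟩ : ℕ) + (t ⟨j, hlt3 j⟩ : ℕ), by
      have := (w₁ ⟨j, hlt1 j⟩).isLt; have := (t ⟨j, hlt3 j⟩).isLt; omega⟩,
      fun j => w₁ ⟨m + j, hlt2 j⟩⟩,
    fun w₂ t => e ⟨fun j => ⟨(w₂ ⟨m + j, hlt2 j⟩ : ℕ) + (t ⟨j, hlt3 j⟩ : ℕ), by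
      have := (w₂ ⟨m + j, hlt2 j⟩).isLt; have := (t ⟨j, hlt3 j⟩).isLt; omega⟩,
      fun j => w₂ ⟨j, hlt1 j⟩⟩,
    fun x y i =>
      if h : (i : ℕ) < m then
        ((Function.invFun e x).1 ⟨i, h⟩ : ℕ) + ((Function.invFun e y).2 ⟨i, h⟩ : ℕ)
      else
        ((Function.invFun e x).2 ⟨(i : ℕ) - m, by omega⟩ : ℕ)
          + ((Function.invFun e y).1 ⟨(i : ℕ) - m, by omega⟩ : ℕ),
    ?_⟩
  intro w₁ w₂ w₃ i
  have hinv := Function.leftInverse_invFun e.injective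
  simp only [hinv _]
  by_cases h : (i : ℕ) < m
  · simp only [dif_pos h, Fin.eta]
    omega
  · have hi2 : ((i : ℕ) - m) < m := by have := i.isLt; omega
    simp only [dif_neg h, hi2, dif_pos, Fin.eta]
    have hi : m + ((i : ℕ) - m) = (i : ℕ) := by omega
    simp only [hi, Fin.eta]
    omega
end

section
/- The supremum of the set of real numbers { k/n : k, n positive integers such that there exists a (k,n) solution for computing the arithmetic sum in the diamond network } equals 2/(1 + log₂ 3). Here a (k,n) solution is the existence of functions t₁, t₂ : (Fin k → Fin 2) → (Fin n → Fin 2), g₁, g₂ : (Fin k → Fin 2) → (Fin n → Fin 2) → (Fin n → Fin 2), and ψ : (Fin n → Fin 2) → (Fin n → Fin 2) → (Fin k → ℕ) such that for all w₁, w₂, w₃ : Fin k → Fin 2 and all i ∈ Fin k, ψ (g₁ w₁ (t₁ w₃)) (g₂ w₂ (t₂ w₃)) i = (w₁ i : ℕ) + (w₂ i : ℕ) + (w₃ i : ℕ). -/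
open Function Filter Real Topology

open Function

/-- The "good pattern" type: triples of bits avoiding (0,0,1) and (1,1,0). -/
abbrev GoodT := {t : Fin 2 × Fin 2 × Fin 2 //
    ((t.2.2 : ℕ) = 1 → 1 ≤ (t.1 : ℕ) + (t.2.1 : ℕ)) ∧
    ((t.2.2 : ℕ) = 0 → (t.1 : ℕ) + (t.2.1 : ℕ) ≤ 1)}

lemma card_GoodT : Fintype.card GoodT = 6 := by decide

lemma diamond_converse {k n : ℕ}
    (t₁ t₂ : (Fin k → Fin 2) → (Fin n → Fin 2))
    (g₁ g₂ : (Fin k → Fin 2) → (Fin n → Fin 2) → (Fin n → Fin 2))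
    (ψ : (Fin n → Fin 2) → (Fin n → Fin 2) → (Fin k → ℕ))
    (h : ∀ w₁ w₂ w₃ : Fin k → Fin 2, ∀ i : Fin k,
      ψ (g₁ w₁ (t₁ w₃)) (g₂ w₂ (t₂ w₃)) i
        = (w₁ i : ℕ) + (w₂ i : ℕ) + (w₃ i : ℕ)) :
    6 ^ k ≤ 2 ^ n * 2 ^ n := by
  have hinj : Function.Injective
      (fun f : Fin k → GoodT =>
        ((g₁ (fun i => (f i).1.1) (t₁ (fun i => (f i).1.2.2)),
          g₂ (fun i => (f i).1.2.1) (t₂ (fun i => (f i).1.2.2))) :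
          (Fin n → Fin 2) × (Fin n → Fin 2))) := by
    intro f f' hff
    simp only [Prod.mk.injEq] at hff
    obtain ⟨h1, h2⟩ := hff
    set w₁ : Fin k → Fin 2 := fun i => (f i).1.1 with hw₁def
    set w₂ : Fin k → Fin 2 := fun i => (f i).1.2.1 with hw₂def
    set w₃ : Fin k → Fin 2 := fun i => (f i).1.2.2 with hw₃def
    set v₁ : Fin k → Fin 2 := fun i => (f' i).1.1 with hv₁def
    set v₂ : Fin k → Fin 2 := fun i => (f' i).1.2.1 with hv₂def
    set v₃ : Fin k → Fin 2 := fun i => (f' i).1.2.2 with hv₃def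
    have hsum : ∀ i, (w₁ i : ℕ) + (w₂ i : ℕ) + (w₃ i : ℕ)
        = (v₁ i : ℕ) + (v₂ i : ℕ) + (v₃ i : ℕ) := by
      intro i
      rw [← h w₁ w₂ w₃ i, ← h v₁ v₂ v₃ i, h1, h2]
    have hw3 : w₃ = v₃ := by
      funext i
      have hfa : ((w₃ i : ℕ) = 1 → 1 ≤ (w₁ i : ℕ) + (w₂ i : ℕ)) := (f i).2.1
      have hfb : ((w₃ i : ℕ) = 0 → (w₁ i : ℕ) + (w₂ i : ℕ) ≤ 1) := (f i).2.2
      have hfa' : ((v₃ i : ℕ) = 1 → 1 ≤ (v₁ i : ℕ) + (v₂ i : ℕ)) := (f' i).2.1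
      have hfb' : ((v₃ i : ℕ) = 0 → (v₁ i : ℕ) + (v₂ i : ℕ) ≤ 1) := (f' i).2.2
      have hs := hsum i
      have b1 : (w₁ i : ℕ) < 2 := (w₁ i).is_lt
      have b2 : (w₂ i : ℕ) < 2 := (w₂ i).is_lt
      have b3 : (w₃ i : ℕ) < 2 := (w₃ i).is_lt
      have c1 : (v₁ i : ℕ) < 2 := (v₁ i).is_lt
      have c2 : (v₂ i : ℕ) < 2 := (v₂ i).is_lt
      have c3 : (v₃ i : ℕ) < 2 := (v₃ i).is_lt
      have : (w₃ i : ℕ) = (v₃ i : ℕ) := by omega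
      exact Fin.ext this
    rw [hw3] at h1 h2
    have hw1 : w₁ = v₁ := by
      funext i
      have e1 := h w₁ w₂ v₃ i
      have e2 := h v₁ w₂ v₃ i
      rw [h1] at e1
      have : (w₁ i : ℕ) = (v₁ i : ℕ) := by omega
      exact Fin.ext this
    have hw2 : w₂ = v₂ := by
      funext i
      have e1 := h w₁ w₂ v₃ i
      have e2 := h w₁ v₂ v₃ i
      rw [h2] at e1
      have : (w₂ i : ℕ) = (v₂ i : ℕ) := by omega
      exact Fin.ext this
    funext i
    apply Subtype.ext
    exact Prod.ext (congrFun hw1 i) (Prod.ext (congrFun hw2 i) (congrFun hw3 i))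
  have hcard := Fintype.card_le_of_injective _ hinj
  simpa [card_GoodT, Fintype.card_fun] using hcard

open Function

/-- Sum of two bits as an element of `Fin 3`. -/
def add23 (a b : Fin 2) : Fin 3 :=
  ⟨(a : ℕ) + (b : ℕ), by have := a.is_lt; have := b.is_lt; omega⟩

lemma diamond_sol (m : ℕ) :
    ∃ (t₁ t₂ : (Fin (m + m) → Fin 2) → (Fin (m + Nat.clog 2 (3 ^ m)) → Fin 2))
      (g₁ g₂ : (Fin (m + m) → Fin 2) → (Fin (m + Nat.clog 2 (3 ^ m)) → Fin 2)
        → (Fin (m + Nat.clog 2 (3 ^ m)) → Fin 2))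
      (ψ : (Fin (m + Nat.clog 2 (3 ^ m)) → Fin 2)
        → (Fin (m + Nat.clog 2 (3 ^ m)) → Fin 2) → (Fin (m + m) → ℕ)),
      ∀ w₁ w₂ w₃ : Fin (m + m) → Fin 2, ∀ i : Fin (m + m),
        ψ (g₁ w₁ (t₁ w₃)) (g₂ w₂ (t₂ w₃)) i
          = (w₁ i : ℕ) + (w₂ i : ℕ) + (w₃ i : ℕ) := by
  set n := m + Nat.clog 2 (3 ^ m) with hn
  have hmn : m ≤ n := Nat.le_add_right _ _
  have h3 : 3 ^ m ≤ 2 ^ Nat.clog 2 (3 ^ m) := Nat.le_pow_clog (by norm_num) _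
  have hcard6 : 3 ^ m * 2 ^ m ≤ 2 ^ n := by
    calc 3 ^ m * 2 ^ m ≤ 2 ^ Nat.clog 2 (3 ^ m) * 2 ^ m :=
          Nat.mul_le_mul_right _ h3
      _ = 2 ^ n := by rw [hn, pow_add, mul_comm]
  obtain ⟨E⟩ : Nonempty ((Fin m → Fin 2) ↪ (Fin n → Fin 2)) :=
    Function.Embedding.nonempty_of_card_le (by
      simp only [Fintype.card_fun, Fintype.card_fin]
      exact Nat.pow_le_pow_right (by norm_num) hmn)
  obtain ⟨F⟩ : Nonempty (((Fin m → Fin 3) × (Fin m → Fin 2)) ↪ (Fin n → Fin 2)) :=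
    Function.Embedding.nonempty_of_card_le (by
      simp only [Fintype.card_prod, Fintype.card_fun, Fintype.card_fin]
      exact hcard6)
  obtain ⟨F'⟩ : Nonempty (((Fin m → Fin 2) × (Fin m → Fin 3)) ↪ (Fin n → Fin 2)) :=
    Function.Embedding.nonempty_of_card_le (by
      simp only [Fintype.card_prod, Fintype.card_fun, Fintype.card_fin]
      rw [mul_comm]; exact hcard6)
  have hE : ∀ y, Function.invFun (⇑E) (E y) = y :=
    Function.leftInverse_invFun E.injective
  have hF : ∀ y, Function.invFun (⇑F) (F y) = y :=
    Function.leftInverse_invFun F.injective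
  have hF' : ∀ y, Function.invFun (⇑F') (F' y) = y :=
    Function.leftInverse_invFun F'.injective
  refine ⟨fun w₃ => E (fun j => w₃ (finSumFinEquiv (Sum.inl j))),
    fun w₃ => E (fun j => w₃ (finSumFinEquiv (Sum.inr j))),
    fun w₁ t => F (fun j => add23 (w₁ (finSumFinEquiv (Sum.inl j))) (Function.invFun (⇑E) t j),
      fun j => w₁ (finSumFinEquiv (Sum.inr j))),
    fun w₂ t => F' (fun j => w₂ (finSumFinEquiv (Sum.inl j)),
      fun j => add23 (w₂ (finSumFinEquiv (Sum.inr j))) (Function.invFun (⇑E) t j)),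
    fun P Q i =>
      match finSumFinEquiv.symm i with
      | Sum.inl j => ((Function.invFun (⇑F) P).1 j : ℕ) + ((Function.invFun (⇑F') Q).1 j : ℕ)
      | Sum.inr j => ((Function.invFun (⇑F) P).2 j : ℕ) + ((Function.invFun (⇑F') Q).2 j : ℕ),
    ?_⟩
  intro w₁ w₂ w₃ i
  rcases hi : finSumFinEquiv.symm i with j | j
  · simp only [hi, hF, hF', hE]
    have hieq : i = finSumFinEquiv (Sum.inl j) := by rw [← hi]; simp
    rw [hieq]
    simp [add23]
    omega
  · simp only [hi, hF, hF', hE]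
    have hieq : i = finSumFinEquiv (Sum.inr j) := by rw [← hi]; simp
    rw [hieq]
    simp [add23]
    omega


/-- Theorem 5.1: the computing capacity of the diamond network with respect to
the arithmetic sum target function equals `2 / (1 + log₂ 3)`. -/
theorem stmt_14 :
    sSup { r : ℝ | ∃ k n : ℕ, 0 < k ∧ 0 < n ∧ r = (k : ℝ) / n ∧
      ∃ (t₁ t₂ : (Fin k → Fin 2) → (Fin n → Fin 2))
        (g₁ g₂ : (Fin k → Fin 2) → (Fin n → Fin 2) → (Fin n → Fin 2))
        (ψ : (Fin n → Fin 2) → (Fin n → Fin 2) → (Fin k → ℕ)),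
        ∀ w₁ w₂ w₃ : Fin k → Fin 2, ∀ i : Fin k,
          ψ (g₁ w₁ (t₁ w₃)) (g₂ w₂ (t₂ w₃)) i
            = (w₁ i : ℕ) + (w₂ i : ℕ) + (w₃ i : ℕ) }
      = 2 / (1 + Real.logb 2 3) := by
  set L : ℝ := 2 / (1 + Real.logb 2 3) with hL
  set S : Set ℝ := { r : ℝ | ∃ k n : ℕ, 0 < k ∧ 0 < n ∧ r = (k : ℝ) / n ∧
      ∃ (t₁ t₂ : (Fin k → Fin 2) → (Fin n → Fin 2))
        (g₁ g₂ : (Fin k → Fin 2) → (Fin n → Fin 2) → (Fin n → Fin 2))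
        (ψ : (Fin n → Fin 2) → (Fin n → Fin 2) → (Fin k → ℕ)),
        ∀ w₁ w₂ w₃ : Fin k → Fin 2, ∀ i : Fin k,
          ψ (g₁ w₁ (t₁ w₃)) (g₂ w₂ (t₂ w₃)) i
            = (w₁ i : ℕ) + (w₂ i : ℕ) + (w₃ i : ℕ) } with hS
  have hlogb3pos : (0:ℝ) < Real.logb 2 3 := Real.logb_pos (by norm_num) (by norm_num)
  have hden : (0:ℝ) < 1 + Real.logb 2 3 := by linarith
  -- upper bound: every achievable rate is at most L
  have hub : ∀ r ∈ S, r ≤ L := by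
    rintro r ⟨k, n, hk, hn, rfl, t₁, t₂, g₁, g₂, ψ, hψ⟩
    have hcard : 6 ^ k ≤ 2 ^ n * 2 ^ n := diamond_converse t₁ t₂ g₁ g₂ ψ hψ
    have hcardR : (6:ℝ) ^ k ≤ (2:ℝ) ^ n * (2:ℝ) ^ n := by exact_mod_cast hcard
    have hlog : (k:ℝ) * Real.logb 2 6 ≤ (n:ℝ) + (n:ℝ) := by
      have h1 : Real.logb 2 ((6:ℝ) ^ k) ≤ Real.logb 2 ((2:ℝ) ^ n * (2:ℝ) ^ n) :=
        Real.logb_le_logb_of_le (by norm_num) (by positivity) hcardR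
      rw [Real.logb_pow] at h1
      rw [show (2:ℝ) ^ n * (2:ℝ) ^ n = (2:ℝ) ^ (n + n) by rw [pow_add]] at h1
      rw [Real.logb_pow, Real.logb_self_eq_one (by norm_num : (1:ℝ) < 2)] at h1
      push_cast at h1 ⊢
      linarith
    have h6 : Real.logb 2 6 = 1 + Real.logb 2 3 := by
      rw [show (6:ℝ) = 2 * 3 by norm_num,
        Real.logb_mul (by norm_num) (by norm_num),
        Real.logb_self_eq_one (by norm_num : (1:ℝ) < 2)]
    rw [hL, div_le_div_iff₀ (by exact_mod_cast hn) hden]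
    rw [h6] at hlog
    linarith
  have hbdd : BddAbove S := ⟨L, hub⟩
  -- membership of the constructed rates
  have hmem : ∀ m : ℕ, 0 < m →
      ((↑(m + m) : ℝ) / (↑(m + Nat.clog 2 (3 ^ m)) : ℝ)) ∈ S := by
    intro m hm
    exact ⟨m + m, m + Nat.clog 2 (3 ^ m), by omega, by omega, rfl, diamond_sol m⟩
  have hne : S.Nonempty := ⟨_, hmem 1 one_pos⟩
  refine le_antisymm (csSup_le hne hub) ?_
  -- lower bound via the sequence of rates
  have hclog_le : ∀ m : ℕ, 0 < m →
      ((Nat.clog 2 (3 ^ m) : ℝ)) ≤ Real.logb 2 3 * m + 1 := by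
    intro m hm
    have h31 : 1 < 3 ^ m := Nat.one_lt_pow (by omega) (by norm_num)
    have hpos : 0 < Nat.clog 2 (3 ^ m) := Nat.clog_pos (by norm_num) (by
      calc 2 ≤ 3 := by norm_num
        _ ≤ 3 ^ m := Nat.le_self_pow (by omega) 3)
    have h2 : (2:ℕ) ^ (Nat.clog 2 (3 ^ m) - 1) < 3 ^ m :=
      Nat.pow_pred_clog_lt_self (by norm_num) h31
    have h2R : (2:ℝ) ^ (Nat.clog 2 (3 ^ m) - 1) ≤ (3:ℝ) ^ m := by
      exact_mod_cast h2.le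
    have h3 : ((Nat.clog 2 (3 ^ m) - 1 : ℕ) : ℝ) ≤ Real.logb 2 3 * m := by
      have := Real.logb_le_logb_of_le (b := 2) (by norm_num)
        (by positivity : (0:ℝ) < (2:ℝ) ^ (Nat.clog 2 (3 ^ m) - 1)) h2R
      rwa [Real.logb_pow, Real.logb_pow,
        Real.logb_self_eq_one (by norm_num : (1:ℝ) < 2), mul_one, mul_comm] at this
    rw [Nat.cast_sub hpos] at h3
    push_cast at h3 ⊢
    linarith
  have hglef : ∀ᶠ m : ℕ in atTop,
      (2 * (m:ℝ)) / ((1 + Real.logb 2 3) * m + 1) ≤ sSup S := by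
    filter_upwards [eventually_gt_atTop 0] with m hm
    have hmR : (0:ℝ) < m := by exact_mod_cast hm
    have hclogR : (0:ℝ) ≤ (Nat.clog 2 (3 ^ m) : ℝ) := by positivity
    have hd1 : (0:ℝ) < (↑(m + Nat.clog 2 (3 ^ m)) : ℝ) := by
      push_cast; linarith
    have hstep : (2 * (m:ℝ)) / ((1 + Real.logb 2 3) * m + 1)
        ≤ (↑(m + m) : ℝ) / (↑(m + Nat.clog 2 (3 ^ m)) : ℝ) := by
      have hden2 : (↑(m + Nat.clog 2 (3 ^ m)) : ℝ) ≤ (1 + Real.logb 2 3) * m + 1 := by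
        have := hclog_le m hm
        push_cast
        linarith
      have h2m : (↑(m + m) : ℝ) = 2 * (m:ℝ) := by push_cast; ring
      rw [h2m]
      exact div_le_div_of_nonneg_left (by linarith) hd1 hden2
    exact hstep.trans (le_csSup hbdd (hmem m hm))
  have hkey : Tendsto (fun m : ℕ => (2 * (m:ℝ)) / ((1 + Real.logb 2 3) * m + 1))
      atTop (𝓝 L) := by
    have h1 : Tendsto (fun m : ℕ => (2:ℝ) / ((1 + Real.logb 2 3) + 1 / m))
        atTop (𝓝 (2 / ((1 + Real.logb 2 3) + 0))) :=
      tendsto_const_nhds.div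
        (tendsto_const_nhds.add tendsto_one_div_atTop_nhds_zero_nat) (by linarith)
    rw [add_zero] at h1
    refine Tendsto.congr' ?_ h1
    filter_upwards [eventually_gt_atTop 0] with m hm
    have hmR : (0:ℝ) < m := by exact_mod_cast hm
    rw [div_eq_div_iff (by positivity) (by nlinarith)]
    field_simp
  exact le_of_tendsto hkey hglef
end
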